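/- arXiv:2307.12226 — 6 statements merged into one kernel-verified Lean document; each statement's English description precedes it below -/
import Mathlib

section
/- In a finite tree, for any two vertices u and v and any vertex p on the unique path between u and v, setting weights w_u = d(p,v)/d(u,v) and w_v = d(p,u)/d(u,v) makes p the unique minimizer of y ↦ w_u·d²(y,u) + w_v·d²(y,v) over all tree vertices. -/
open SimpleGraph

lemma tree_point_on_path_unique {V : Type*} (G : SimpleGraph V) (hT : G.IsTree)
    (u v p y : V)
    (hp : G.dist u p + G.dist p v = G.dist u v)
    (hy : G.dist u y + G.dist y v = G.dist u v)
    (hd : G.dist u y = G.dist u p) : y = p := by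
  obtain ⟨W1, hW1⟩ := (hT.isConnected u y).exists_walk_length_eq_dist
  obtain ⟨W2, hW2⟩ := (hT.isConnected y v).exists_walk_length_eq_dist
  obtain ⟨P1, hP1⟩ := (hT.isConnected u p).exists_walk_length_eq_dist
  obtain ⟨P2, hP2⟩ := (hT.isConnected p v).exists_walk_length_eq_dist
  set W := W1.append W2 with hW
  set P := P1.append P2 with hP
  have hWlen : W.length = G.dist u v := by
    rw [hW, Walk.length_append, hW1, hW2, hy]
  have hPlen : P.length = G.dist u v := by
    rw [hP, Walk.length_append, hP1, hP2, hp]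
  have hWpath : W.IsPath := W.isPath_of_length_eq_dist hWlen
  have hPpath : P.IsPath := P.isPath_of_length_eq_dist hPlen
  obtain ⟨Q, -, hQuniq⟩ := hT.existsUnique_path u v
  have hWP : W = P := (hQuniq W hWpath).trans (hQuniq P hPpath).symm
  have h1 : W.getVert W1.length = y := by
    rw [hW, Walk.getVert_append]
    simp
  have h2 : P.getVert P1.length = p := by
    rw [hP, Walk.getVert_append]
    simp
  have hlen : W1.length = P1.length := by rw [hW1, hP1, hd]
  rw [← h1, ← h2, hWP, hlen]

lemma quad_real_ineq (a b x z : ℝ) (ha : 0 ≤ a) (hb : 0 ≤ b)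
    (hx : 0 ≤ x) (hz : 0 ≤ z) (hxz : a + b ≤ x + z)
    (hD : 0 < a + b)
    (hne : x ≠ a ∨ z ≠ b)
    (hxa : a = 0 → x ≠ 0) (hzb : b = 0 → z ≠ 0) :
    b * a ^ 2 + a * b ^ 2 < b * x ^ 2 + a * z ^ 2 := by
  have hident : b * x ^ 2 + a * z ^ 2 - (b * a ^ 2 + a * b ^ 2)
      = b * (x - a) ^ 2 + a * (z - b) ^ 2 + 2 * a * b * ((x + z) - (a + b)) := by
    ring
  have h3 : 0 ≤ 2 * a * b * ((x + z) - (a + b)) :=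
    mul_nonneg (by positivity) (by linarith)
  have h1 : 0 ≤ b * (x - a) ^ 2 := by positivity
  have h2 : 0 ≤ a * (z - b) ^ 2 := by positivity
  rcases eq_or_lt_of_le ha with ha0 | ha0
  · have hb0 : 0 < b := by linarith
    have hxne : x - a ≠ 0 := by
      rw [← ha0, sub_zero]; exact hxa ha0.symm
    have hpos : 0 < b * (x - a) ^ 2 := mul_pos hb0 (by positivity)
    linarith
  rcases eq_or_lt_of_le hb with hb0 | hb0
  · have hzne : z - b ≠ 0 := by
      rw [← hb0, sub_zero]; exact hzb hb0.symm
    have hpos : 0 < a * (z - b) ^ 2 := mul_pos ha0 (by positivity)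
    linarith
  · rcases hne with h | h
    · have hxne : x - a ≠ 0 := sub_ne_zero.mpr h
      have hpos : 0 < b * (x - a) ^ 2 := mul_pos hb0 (by positivity)
      linarith
    · have hzne : z - b ≠ 0 := sub_ne_zero.mpr h
      have hpos : 0 < a * (z - b) ^ 2 := mul_pos ha0 (by positivity)
      linarith

/-- In a finite tree, a vertex `p` on the unique `u`–`v` path is the unique
minimizer of `y ↦ (d(p,v)/d(u,v))·d²(y,u) + (d(p,u)/d(u,v))·d²(y,v)`. -/
theorem path_point_unique_frechet_mean
    {V : Type*} [Fintype V] (G : SimpleGraph V) (hT : G.IsTree)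
    (u v p : V) (huv : u ≠ v)
    (hp : G.dist u p + G.dist p v = G.dist u v) :
    ∀ y : V, y ≠ p →
      (G.dist p v : ℝ) / (G.dist u v : ℝ) * (G.dist p u : ℝ) ^ 2
        + (G.dist p u : ℝ) / (G.dist u v : ℝ) * (G.dist p v : ℝ) ^ 2
      < (G.dist p v : ℝ) / (G.dist u v : ℝ) * (G.dist y u : ℝ) ^ 2
        + (G.dist p u : ℝ) / (G.dist u v : ℝ) * (G.dist y v : ℝ) ^ 2 := by
  intro y hy
  have hconn := hT.isConnected
  have hDpos : 0 < G.dist u v := hconn.pos_dist_of_ne huv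
  have hpu : G.dist p u = G.dist u p := SimpleGraph.dist_comm ..
  have hyu : G.dist y u = G.dist u y := SimpleGraph.dist_comm ..
  -- natural number facts
  have htri : G.dist u v ≤ G.dist u y + G.dist y v :=
    hconn.dist_triangle (u := u) (v := y) (w := v)
  have hne : G.dist u y ≠ G.dist u p ∨ G.dist y v ≠ G.dist p v := by
    by_contra h
    push_neg at h
    exact hy (tree_point_on_path_unique G hT u v p y hp (by omega) h.1)
  have hxa : G.dist u p = 0 → G.dist u y ≠ 0 := by
    intro h0 h1
    have hpu' : u = p := (dist_eq_zero_iff_eq_or_not_reachable.mp h0).resolve_right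
      (fun h => h (hconn u p))
    have hy' : u = y := (dist_eq_zero_iff_eq_or_not_reachable.mp h1).resolve_right
      (fun h => h (hconn u y))
    exact hy (hy' ▸ hpu')
  have hzb : G.dist p v = 0 → G.dist y v ≠ 0 := by
    intro h0 h1
    have hpv : p = v := (dist_eq_zero_iff_eq_or_not_reachable.mp h0).resolve_right
      (fun h => h (hconn p v))
    have hyv : y = v := (dist_eq_zero_iff_eq_or_not_reachable.mp h1).resolve_right
      (fun h => h (hconn y v))
    exact hy (hyv.trans hpv.symm)
  -- pass to reals
  have key := quad_real_ineq (G.dist u p) (G.dist p v) (G.dist u y) (G.dist y v)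
    (Nat.cast_nonneg _) (Nat.cast_nonneg _) (Nat.cast_nonneg _) (Nat.cast_nonneg _)
    (by exact_mod_cast hp ▸ (Nat.cast_le.mpr htri : ((G.dist u v : ℕ) : ℝ) ≤ _))
    (by exact_mod_cast hp ▸ hDpos)
    (by
      rcases hne with h | h
      · exact Or.inl (fun hh => h (Nat.cast_injective hh))
      · exact Or.inr (fun hh => h (Nat.cast_injective hh)))
    (fun h hh => hxa (Nat.cast_eq_zero.mp h) (Nat.cast_eq_zero.mp hh))
    (fun h hh => hzb (Nat.cast_eq_zero.mp h) (Nat.cast_eq_zero.mp hh))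
  have hab : ((G.dist u p : ℝ)) + (G.dist p v : ℝ) = (G.dist u v : ℝ) := by
    exact_mod_cast congrArg (Nat.cast : ℕ → ℝ) hp
  have hD : (0:ℝ) < (G.dist u v : ℝ) := by exact_mod_cast hDpos
  rw [hpu, hyu, div_mul_eq_mul_div, div_mul_eq_mul_div, div_mul_eq_mul_div,
    div_mul_eq_mul_div, ← add_div, ← add_div]
  exact div_lt_div_of_pos_right key hD
end

section
/- In a finite tree, if a vertex y* lies in the locus Π(Λ) of a set of vertices Λ, then y* lies on the path between some pair of vertices of Λ. Equivalently: if y* is not on the path Γ(λᵢ, λⱼ) for any λᵢ, λⱼ ∈ Λ, then for every probability weight vector w there exists a neighbor y' of y* with Σᵢ wᵢ d²(y', λᵢ) < Σᵢ wᵢ d²(y*, λᵢ), so y* is not a Fréchet mean. -/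
/-!
Let `a ∈ Λ` and let `y'` be the neighbour of `y*` on the path towards `a`. In a tree every
vertex has at most one neighbour closer to a given vertex `b`, so the distance to `b` increases
by one at every step of a path leaving `b` behind. Hence if `y'` were farther from some `b ∈ Λ`
than `y*` is, the path `b → y* → y' → ⋯ → a` would be a geodesic and `y*` would lie on
`Γ(a, b)`. So `y'` is strictly closer than `y*` to every point of `Λ`, and every squared
distance in the Fréchet functional drops.
-/

theorem Finset.sum_mul_lt_sum_mul_of_lt_of_sum_pos {ι R : Type*} [Semiring R] [LinearOrder R]
    [IsStrictOrderedRing R] {s : Finset ι} {w f g : ι → R} (hw : ∀ i ∈ s, 0 ≤ w i)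
    (hpos : 0 < ∑ i ∈ s, w i) (hfg : ∀ i ∈ s, f i < g i) :
    ∑ i ∈ s, w i * f i < ∑ i ∈ s, w i * g i := by
  obtain ⟨j, hj, hwj⟩ :=
    Finset.exists_lt_of_sum_lt (s := s) (f := 0) (g := w) (by simpa using hpos)
  exact Finset.sum_lt_sum (fun i hi => mul_le_mul_of_nonneg_left (hfg i hi).le (hw i hi))
    ⟨j, hj, mul_lt_mul_of_pos_left (hfg j hj) hwj⟩

namespace SimpleGraph

variable {V : Type*} {G : SimpleGraph V}

lemma Reachable.exists_adj_dist_add_one_eq {u v : V} (h : G.Reachable u v) (hne : u ≠ v) :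
    ∃ w, G.Adj u w ∧ G.dist w v + 1 = G.dist u v := by
  obtain ⟨p, hp⟩ := h.exists_walk_length_eq_dist
  have hnil : ¬ p.Nil := Walk.not_nil_of_ne hne
  have hadj : G.Adj u p.snd := p.adj_snd hnil
  refine ⟨p.snd, hadj, le_antisymm ?_ ?_⟩
  · have := dist_le p.tail
    have := p.length_tail_add_one hnil
    omega
  · have := hadj.reachable.dist_triangle_left v
    rw [dist_eq_one_iff_adj.mpr hadj] at this
    omega

namespace IsTree

lemma eq_of_adj_of_dist_add_one_eq (hG : G.IsTree) (b : V) {u v w : V} (hu : G.Adj u v)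
    (hw : G.Adj w v) (hdu : G.dist b u + 1 = G.dist b v) (hdw : G.dist b w + 1 = G.dist b v) :
    u = w := by
  obtain ⟨p, hp⟩ := hG.connected.exists_walk_length_eq_dist b u
  obtain ⟨q, hq⟩ := hG.connected.exists_walk_length_eq_dist b w
  have hpu : (p.concat hu).IsPath :=
    Walk.isPath_of_length_eq_dist _ (by rw [Walk.length_concat, hp, hdu])
  have hqw : (q.concat hw).IsPath :=
    Walk.isPath_of_length_eq_dist _ (by rw [Walk.length_concat, hq, hdw])
  have hpq := congrArg Subtype.val <|
    (hG.isAcyclic.subsingleton_path b v).elim ⟨_, hpu⟩ ⟨_, hqw⟩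
  exact (Walk.concat_inj hpq).1

lemma dist_eq_add_length_of_isPath_cons (hG : G.IsTree) (b : V) {u v a : V} (h : G.Adj u v)
    (s : G.Walk v a) (hs : (Walk.cons h s).IsPath) (hd : G.dist b v = G.dist b u + 1) :
    G.dist b a = G.dist b u + 1 + s.length := by
  induction s generalizing u with
  | nil => simpa using hd
  | @cons v w a h' t ih =>
    have hne : u ≠ w := fun huw => (Walk.cons_isPath_iff _ _).mp hs |>.2 (by simp [huw])
    have hdw : G.dist b w = G.dist b v + 1 :=
      (hG.dist_eq_dist_add_one_of_adj b h').resolve_left fun hvw =>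
        hne (hG.eq_of_adj_of_dist_add_one_eq b h h'.symm hd.symm hvw.symm)
    rw [ih h' hs.of_cons hdw, hd, Walk.length_cons]
    ring

lemma dist_add_one_eq_or_dist_add_dist_eq (hG : G.IsTree) {y y' a : V} (hadj : G.Adj y y')
    (htoward : G.dist y' a + 1 = G.dist y a) (b : V) :
    G.dist y' b + 1 = G.dist y b ∨ G.dist a y + G.dist y b = G.dist a b := by
  obtain ⟨r, hr⟩ := hG.connected.exists_walk_length_eq_dist y' a
  have hpath : (Walk.cons hadj r).IsPath :=
    Walk.isPath_of_length_eq_dist _ (by rw [Walk.length_cons, hr, htoward])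
  rcases hG.dist_eq_dist_add_one_of_adj b hadj with h | h
  · left
    rw [dist_comm (u := y'), dist_comm (u := y), h]
  · right
    rw [dist_comm (u := a), dist_comm (u := a) (v := b), dist_comm (u := y) (v := b),
      hG.dist_eq_add_length_of_isPath_cons b hadj r hpath h, hr, ← htoward]
    ring

end IsTree

end SimpleGraph

theorem off_path_vertex_not_frechet_mean_general
    {V : Type*}
    (G : SimpleGraph V) (hT : G.IsTree)
    (Λ : Finset V) (hΛ : Λ.Nonempty) (ystar : V)
    (hoff : ∀ a ∈ Λ, ∀ b ∈ Λ, G.dist a ystar + G.dist ystar b ≠ G.dist a b)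
    (w : V → ℝ) (hw : ∀ x, 0 ≤ w x) (hsum : ∑ x ∈ Λ, w x = 1) :
    ∃ y' : V, G.Adj ystar y' ∧
      ∑ x ∈ Λ, w x * (G.dist y' x : ℝ) ^ 2
        < ∑ x ∈ Λ, w x * (G.dist ystar x : ℝ) ^ 2 := by
  obtain ⟨a, ha⟩ := hΛ
  have hne : ystar ≠ a := fun h => hoff a ha a ha (by simp [h])
  obtain ⟨y', hadj, htoward⟩ := (hT.connected ystar a).exists_adj_dist_add_one_eq hne
  refine ⟨y', hadj, Finset.sum_mul_lt_sum_mul_of_lt_of_sum_pos (fun x _ => hw x)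
    (by rw [hsum]; exact one_pos) fun b hb => ?_⟩
  have hcloser : G.dist y' b + 1 = G.dist ystar b :=
    (hT.dist_add_one_eq_or_dist_add_dist_eq hadj htoward b).resolve_right (hoff a ha b hb)
  gcongr
  exact_mod_cast Nat.lt_of_succ_le hcloser.le

/-- In a finite tree, a vertex lying on no path between points of `Λ` admits,
for every probability weight vector, a neighbor with strictly smaller Fréchet
variance; hence it is not a Fréchet mean. -/
theorem off_path_vertex_not_frechet_mean
    {V : Type*} [Fintype V] [DecidableEq V]
    (G : SimpleGraph V) (hT : G.IsTree)
    (Λ : Finset V) (hΛ : Λ.Nonempty) (ystar : V)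
    (hoff : ∀ a ∈ Λ, ∀ b ∈ Λ, G.dist a ystar + G.dist ystar b ≠ G.dist a b)
    (w : V → ℝ) (hw : ∀ x, 0 ≤ w x) (hsum : ∑ x ∈ Λ, w x = 1) :
    ∃ y' : V, G.Adj ystar y' ∧
      ∑ x ∈ Λ, w x * (G.dist y' x : ℝ) ^ 2
        < ∑ x ∈ Λ, w x * (G.dist ystar x : ℝ) ^ 2 :=
  off_path_vertex_not_frechet_mean_general G hT Λ hΛ ystar hoff w hw hsum
end

section
/- For an m × n grid graph with shortest-path (L1/Manhattan) metric, the two-element set consisting of a pair of opposite corner vertices (e.g., (0,0) and (m-1,n-1)) is a locus cover: every vertex of the grid is a minimizer of y ↦ w₁·d²(y,c₁) + w₂·d²(y,c₂) for some choice of weights w₁, w₂ ≥ 0 with w₁ + w₂ = 1. -/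
/-- Manhattan (shortest-path) distance on the m × n grid graph. -/
def gridDist {m n : ℕ} (u v : Fin m × Fin n) : ℕ :=
  ((u.1 : ℤ) - (v.1 : ℤ)).natAbs + ((u.2 : ℤ) - (v.2 : ℤ)).natAbs

lemma gridDist_corner_sum {m n : ℕ} (hm : 0 < m) (hn : 0 < n) (y : Fin m × Fin n) :
    gridDist y (⟨0, hm⟩, ⟨0, hn⟩)
      + gridDist y (⟨m - 1, Nat.sub_lt hm one_pos⟩, ⟨n - 1, Nat.sub_lt hn one_pos⟩)
      = (m - 1) + (n - 1) := by
  have h1 := y.1.isLt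
  have h2 := y.2.isLt
  simp only [gridDist]
  omega

/-- The pair of opposite corners of a grid graph is a locus cover. -/
theorem grid_opposite_corners_locus_cover
    (m n : ℕ) (hm : 0 < m) (hn : 0 < n) (z : Fin m × Fin n) :
    ∃ w₁ w₂ : ℝ, 0 ≤ w₁ ∧ 0 ≤ w₂ ∧ w₁ + w₂ = 1 ∧
      ∀ y : Fin m × Fin n,
        w₁ * (gridDist z (⟨0, hm⟩, ⟨0, hn⟩) : ℝ) ^ 2
          + w₂ * (gridDist z (⟨m - 1, Nat.sub_lt hm one_pos⟩,
                              ⟨n - 1, Nat.sub_lt hn one_pos⟩) : ℝ) ^ 2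
        ≤ w₁ * (gridDist y (⟨0, hm⟩, ⟨0, hn⟩) : ℝ) ^ 2
          + w₂ * (gridDist y (⟨m - 1, Nat.sub_lt hm one_pos⟩,
                              ⟨n - 1, Nat.sub_lt hn one_pos⟩) : ℝ) ^ 2 := by
  set c0 : Fin m × Fin n := (⟨0, hm⟩, ⟨0, hn⟩) with hc0
  set c1 : Fin m × Fin n := (⟨m - 1, Nat.sub_lt hm one_pos⟩, ⟨n - 1, Nat.sub_lt hn one_pos⟩)
    with hc1
  by_cases hD : (m - 1) + (n - 1) = 0
  · -- degenerate 1×1 grid: all distances are 0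
    refine ⟨1, 0, by norm_num, le_refl 0, by norm_num, fun y => ?_⟩
    have hz := gridDist_corner_sum hm hn z
    have hy := gridDist_corner_sum hm hn y
    rw [← hc0, ← hc1] at hz hy
    have hz0 : gridDist z c0 = 0 := by omega
    have hz1 : gridDist z c1 = 0 := by omega
    have hy0 : gridDist y c0 = 0 := by omega
    rw [hz0, hz1, hy0]
    push_cast
    nlinarith [sq_nonneg ((gridDist y c1 : ℝ))]
  · set D : ℝ := (((m - 1) + (n - 1) : ℕ) : ℝ) with hDdef
    have hDpos : 0 < D := by
      rw [hDdef]; exact_mod_cast Nat.pos_of_ne_zero hD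
    set s : ℝ := (gridDist z c0 : ℝ) with hs
    have hzsum : s + (gridDist z c1 : ℝ) = D := by
      rw [hs, hDdef]
      exact_mod_cast congrArg (Nat.cast : ℕ → ℝ) (gridDist_corner_sum hm hn z)
    have hs0 : 0 ≤ s := by positivity
    have hsD : s ≤ D := by
      have : (0:ℝ) ≤ (gridDist z c1 : ℝ) := by positivity
      linarith
    refine ⟨1 - s / D, s / D, by
        have : s / D ≤ 1 := (div_le_one hDpos).mpr hsD
        linarith,
      div_nonneg hs0 hDpos.le, by ring, fun y => ?_⟩
    have hysum : (gridDist y c0 : ℝ) + (gridDist y c1 : ℝ) = D := by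
      rw [hDdef]
      exact_mod_cast congrArg (Nat.cast : ℕ → ℝ) (gridDist_corner_sum hm hn y)
    set t : ℝ := (gridDist y c0 : ℝ) with ht
    have hw2D : (s / D) * D = s := div_mul_cancel₀ s hDpos.ne'
    have hz1 : (gridDist z c1 : ℝ) = D - s := by linarith
    have hy1 : (gridDist y c1 : ℝ) = D - t := by linarith
    rw [hz1, hy1]
    nlinarith [sq_nonneg (t - s)]
end

section
/- In a finite tree, for any two vertices λ₁, λ₂ and weights w₁, w₂ > 0 with w₁ + w₂ = 1, every minimizer of y ↦ w₁·d²(y,λ₁) + w₂·d²(y,λ₂) lies on the unique path between λ₁ and λ₂. Hence the two-point locus Π({λ₁, λ₂}) equals exactly the vertex set of the path Γ(λ₁, λ₂). -/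
/-!
On a connected graph the two-point Fréchet function
`y ↦ w₁ d(y, λ₁)² + w₂ d(y, λ₂)²` can only be minimised on a geodesic between `λ₁` and `λ₂`:
a vertex `y` off every geodesic is beaten by the vertex at distance `d(λ₁, y)`
from `λ₁` along a shortest `λ₁`–`λ₂` walk, which is no farther from `λ₁` and strictly closer
to `λ₂` (or, when `d(λ₁, y) > d(λ₁, λ₂)`, by `λ₂` itself). Conversely a vertex `y` with
`d(λ₁, y) = a`, `d(y, λ₂) = b`, `a + b = D > 0` minimises the Fréchet function for the weights
`(b / D, a / D)`: for any `z` with `d(z, λ₁) = p`, `d(z, λ₂) = q`, the triangle inequality gives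
`a + b ≤ p + q`, and Cauchy–Schwarz gives `a b (p + q)² ≤ (a + b) (b p² + a q²)`.
In a tree geodesics are unique, so the locus is the vertex set of the path.
-/

lemma mul_mul_add_le_mul_sq_add_mul_sq {a b p q : ℝ} (ha : 0 ≤ a) (hb : 0 ≤ b)
    (h : a + b ≤ p + q) : a * b * (a + b) ≤ b * p ^ 2 + a * q ^ 2 := by
  rcases (add_nonneg ha hb).eq_or_lt with hab | hab
  · rw [← hab, mul_zero]
    positivity
  refine le_of_mul_le_mul_right ?_ hab
  calc a * b * (a + b) * (a + b) ≤ a * b * (p + q) ^ 2 := by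
        rw [mul_assoc, ← sq]
        gcongr
    _ ≤ (b * p ^ 2 + a * q ^ 2) * (a + b) := by nlinarith [sq_nonneg (b * p - a * q)]

namespace SimpleGraph

variable {V : Type*} {G : SimpleGraph V}

lemma Reachable.exists_dist_le_and_dist_le_sub {u v : V} (h : G.Reachable u v) (k : ℕ) :
    ∃ z, G.dist u z ≤ k ∧ G.dist z v ≤ G.dist u v - k := by
  obtain ⟨p, hp⟩ := h.exists_walk_length_eq_dist
  refine ⟨p.getVert k, ?_, ?_⟩
  · exact (dist_le (p.take k)).trans (by simp)
  · exact (dist_le (p.drop k)).trans (by simp [hp])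

variable (G) in
noncomputable def frechetFun (w₁ w₂ : ℝ) (l₁ l₂ y : V) : ℝ :=
  w₁ * (G.dist y l₁ : ℝ) ^ 2 + w₂ * (G.dist y l₂ : ℝ) ^ 2

lemma frechetFun_swap (w₁ w₂ : ℝ) (l₁ l₂ y : V) :
    G.frechetFun w₂ w₁ l₂ l₁ y = G.frechetFun w₁ w₂ l₁ l₂ y :=
  add_comm _ _

lemma frechetFun_lt_of_le_of_lt {w₁ w₂ : ℝ} (hw₁ : 0 ≤ w₁) (hw₂ : 0 < w₂) {l₁ l₂ y z : V}
    (h₁ : G.dist z l₁ ≤ G.dist y l₁) (h₂ : G.dist z l₂ < G.dist y l₂) :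
    G.frechetFun w₁ w₂ l₁ l₂ z < G.frechetFun w₁ w₂ l₁ l₂ y := by
  unfold frechetFun
  exact add_lt_add_of_le_of_lt (by gcongr) (by gcongr)

lemma Connected.dist_add_dist_eq_of_isMin (hG : G.Connected) {w₁ w₂ : ℝ} (hw₁ : 0 < w₁)
    (hw₂ : 0 < w₂) {l₁ l₂ y : V}
    (hy : ∀ z, G.frechetFun w₁ w₂ l₁ l₂ y ≤ G.frechetFun w₁ w₂ l₁ l₂ z) :
    G.dist l₁ y + G.dist y l₂ = G.dist l₁ l₂ := by
  refine le_antisymm ?_ hG.dist_triangle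
  by_contra! hlt
  rcases le_or_gt (G.dist l₁ y) (G.dist l₁ l₂) with hle | hgt
  · obtain ⟨z, hz₁, hz₂⟩ := (hG l₁ l₂).exists_dist_le_and_dist_le_sub (G.dist l₁ y)
    refine (hy z).not_gt (frechetFun_lt_of_le_of_lt hw₁.le hw₂ ?_ (by omega))
    rwa [dist_comm (u := l₁), dist_comm (u := l₁)] at hz₁
  · refine (hy l₂).not_gt ?_
    rw [← frechetFun_swap, ← frechetFun_swap w₁]
    exact frechetFun_lt_of_le_of_lt hw₂.le hw₁ (by simp)
      (by rw [dist_comm, dist_comm (u := y)]; omega)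

lemma Connected.eq_of_isMin_of_weight_zero (hG : G.Connected) {w : ℝ} (hw : 0 < w)
    {l₁ l₂ y : V} (hy : ∀ z, G.frechetFun w 0 l₁ l₂ y ≤ G.frechetFun w 0 l₁ l₂ z) : y = l₁ := by
  by_contra hne
  have h := hy l₁
  have : (0 : ℝ) < G.dist y l₁ := by exact_mod_cast hG.pos_dist_of_ne hne
  simp only [frechetFun, dist_self, zero_mul, add_zero, Nat.cast_zero, zero_pow two_ne_zero,
    mul_zero] at h
  linarith [mul_pos hw (pow_pos this 2)]

lemma Connected.dist_add_dist_eq_of_isMin_of_nonneg (hG : G.Connected) {w₁ w₂ : ℝ}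
    (hw₁ : 0 ≤ w₁) (hw₂ : 0 ≤ w₂) (hsum : w₁ + w₂ = 1) {l₁ l₂ y : V}
    (hy : ∀ z, G.frechetFun w₁ w₂ l₁ l₂ y ≤ G.frechetFun w₁ w₂ l₁ l₂ z) :
    G.dist l₁ y + G.dist y l₂ = G.dist l₁ l₂ := by
  rcases hw₁.eq_or_lt with rfl | hw₁
  · simp_rw [← frechetFun_swap 0] at hy
    obtain rfl := hG.eq_of_isMin_of_weight_zero (by linarith) hy
    simp
  rcases hw₂.eq_or_lt with rfl | hw₂
  · obtain rfl := hG.eq_of_isMin_of_weight_zero hw₁ hy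
    simp
  exact hG.dist_add_dist_eq_of_isMin hw₁ hw₂ hy

lemma Connected.isMin_of_dist_add_dist_eq (hG : G.Connected) {l₁ l₂ y : V}
    (hy : G.dist l₁ y + G.dist y l₂ = G.dist l₁ l₂) (z : V) :
    G.frechetFun (G.dist y l₂ / G.dist l₁ l₂) (G.dist l₁ y / G.dist l₁ l₂) l₁ l₂ y ≤
      G.frechetFun (G.dist y l₂ / G.dist l₁ l₂) (G.dist l₁ y / G.dist l₁ l₂) l₁ l₂ z := by
  have hz : G.dist l₁ y + G.dist y l₂ ≤ G.dist z l₁ + G.dist z l₂ := by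
    rw [hy, dist_comm (u := z)]
    exact hG.dist_triangle
  have key := mul_mul_add_le_mul_sq_add_mul_sq (G.dist l₁ y).cast_nonneg
    (G.dist y l₂).cast_nonneg (p := G.dist z l₁) (q := G.dist z l₂) (by exact_mod_cast hz)
  unfold frechetFun
  rw [← hy, dist_comm (u := y) (v := l₁)]
  push_cast
  rw [div_mul_eq_mul_div, div_mul_eq_mul_div, div_mul_eq_mul_div, div_mul_eq_mul_div,
    ← add_div, ← add_div]
  exact div_le_div_of_nonneg_right (by linarith) (by positivity)

lemma Connected.exists_weights_isMin_of_dist_add_dist_eq (hG : G.Connected) {l₁ l₂ y : V}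
    (hy : G.dist l₁ y + G.dist y l₂ = G.dist l₁ l₂) :
    ∃ w₁ w₂ : ℝ, 0 ≤ w₁ ∧ 0 ≤ w₂ ∧ w₁ + w₂ = 1 ∧
      ∀ z, G.frechetFun w₁ w₂ l₁ l₂ y ≤ G.frechetFun w₁ w₂ l₁ l₂ z := by
  rcases (G.dist l₁ l₂).eq_zero_or_pos with hD | hD
  · obtain rfl : l₁ = y := hG.dist_eq_zero_iff.mp (by omega)
    refine ⟨1, 0, zero_le_one, le_rfl, add_zero 1, fun z => ?_⟩
    simp only [frechetFun, dist_self, Nat.cast_zero, zero_pow two_ne_zero, mul_zero, zero_mul,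
      add_zero, one_mul]
    positivity
  have hD' : (0 : ℝ) < G.dist l₁ l₂ := by exact_mod_cast hD
  refine ⟨_, _, by positivity, by positivity, ?_, hG.isMin_of_dist_add_dist_eq hy⟩
  rw [← add_div, div_eq_one_iff_eq hD'.ne', ← hy]
  push_cast
  ring

end SimpleGraph

theorem tree_two_point_locus_eq_path_general
    {V : Type*} (G : SimpleGraph V) (hT : G.IsTree)
    (l₁ l₂ : V) :
    (∀ w₁ w₂ : ℝ, 0 < w₁ → 0 < w₂ → w₁ + w₂ = 1 →
      ∀ y : V,
        (∀ z : V, w₁ * (G.dist y l₁ : ℝ) ^ 2 + w₂ * (G.dist y l₂ : ℝ) ^ 2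
                ≤ w₁ * (G.dist z l₁ : ℝ) ^ 2 + w₂ * (G.dist z l₂ : ℝ) ^ 2) →
        G.dist l₁ y + G.dist y l₂ = G.dist l₁ l₂) ∧
    {y : V | ∃ w₁ w₂ : ℝ, 0 ≤ w₁ ∧ 0 ≤ w₂ ∧ w₁ + w₂ = 1 ∧
        ∀ z : V, w₁ * (G.dist y l₁ : ℝ) ^ 2 + w₂ * (G.dist y l₂ : ℝ) ^ 2
                ≤ w₁ * (G.dist z l₁ : ℝ) ^ 2 + w₂ * (G.dist z l₂ : ℝ) ^ 2}
      = {y : V | G.dist l₁ y + G.dist y l₂ = G.dist l₁ l₂} := by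
  have hG := hT.connected
  refine ⟨fun w₁ w₂ hw₁ hw₂ _ y hy => hG.dist_add_dist_eq_of_isMin hw₁ hw₂ hy, ?_⟩
  ext y
  exact ⟨fun ⟨_, _, hw₁, hw₂, hsum, hy⟩ => hG.dist_add_dist_eq_of_isMin_of_nonneg hw₁ hw₂ hsum hy,
    hG.exists_weights_isMin_of_dist_add_dist_eq⟩

/-- In a finite tree, every two-point Fréchet mean with strictly positive
weights lies on the path between the two points, and the two-point locus
equals exactly the vertex set of that path. -/
theorem tree_two_point_locus_eq_path
    {V : Type*} [Fintype V] (G : SimpleGraph V) (hT : G.IsTree)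
    (l₁ l₂ : V) :
    (∀ w₁ w₂ : ℝ, 0 < w₁ → 0 < w₂ → w₁ + w₂ = 1 →
      ∀ y : V,
        (∀ z : V, w₁ * (G.dist y l₁ : ℝ) ^ 2 + w₂ * (G.dist y l₂ : ℝ) ^ 2
                ≤ w₁ * (G.dist z l₁ : ℝ) ^ 2 + w₂ * (G.dist z l₂ : ℝ) ^ 2) →
        G.dist l₁ y + G.dist y l₂ = G.dist l₁ l₂) ∧
    {y : V | ∃ w₁ w₂ : ℝ, 0 ≤ w₁ ∧ 0 ≤ w₂ ∧ w₁ + w₂ = 1 ∧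
        ∀ z : V, w₁ * (G.dist y l₁ : ℝ) ^ 2 + w₂ * (G.dist y l₂ : ℝ) ^ 2
                ≤ w₁ * (G.dist z l₁ : ℝ) ^ 2 + w₂ * (G.dist z l₂ : ℝ) ^ 2}
      = {y : V | G.dist l₁ y + G.dist y l₂ = G.dist l₁ l₂} :=
  tree_two_point_locus_eq_path_general G hT l₁ l₂
end

section
/- In an m × n grid graph, for any two vertices u and v, the two-point locus Π({u,v}) equals the vertex set of the subgrid (axis-aligned rectangle) having u and v as opposite corners, i.e., {(x,y) : min(u₁,v₁) ≤ x ≤ max(u₁,v₁), min(u₂,v₂) ≤ y ≤ max(u₂,v₂)}, which is exactly the set of vertices lying on some shortest u–v path. -/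
def twoPointLocus {α : Type*} (d : α → α → ℝ) (u v : α) : Set α :=
  {z | ∃ w₁ w₂ : ℝ, 0 ≤ w₁ ∧ 0 ≤ w₂ ∧ w₁ + w₂ = 1 ∧
    ∀ y, w₁ * d z u ^ 2 + w₂ * d z v ^ 2 ≤ w₁ * d y u ^ 2 + w₂ * d y v ^ 2}

lemma mul_sub_mul_le_weighted_sq {t D a b : ℝ} (ht : 0 ≤ t) (htD : t ≤ D) (hab : D ≤ a + b) :
    t * (D - t) * D ≤ (D - t) * a ^ 2 + t * b ^ 2 := by
  rcases (ht.trans htD).eq_or_lt with hD | hD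
  · subst hD
    obtain rfl : t = 0 := le_antisymm htD ht
    simp
  · have hsq : D ^ 2 ≤ (a + b) ^ 2 := pow_le_pow_left₀ hD.le hab 2
    have hcoef : 0 ≤ t * (D - t) := mul_nonneg ht (sub_nonneg.2 htD)
    refine le_of_mul_le_mul_left ?_ hD
    calc D * (t * (D - t) * D) = t * (D - t) * D ^ 2 := by ring
      _ ≤ t * (D - t) * (a + b) ^ 2 + ((D - t) * a - t * b) ^ 2 :=
        le_add_of_le_of_nonneg (mul_le_mul_of_nonneg_left hsq hcoef) (sq_nonneg _)
      _ = D * ((D - t) * a ^ 2 + t * b ^ 2) := by ring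

section TwoPointLocus

variable {α : Type*} {d : α → α → ℝ} {u v z : α}

lemma mem_twoPointLocus_of_weighted_le {c₁ c₂ : ℝ} (hc₁ : 0 ≤ c₁) (hc₂ : 0 ≤ c₂)
    (hc : 0 < c₁ + c₂)
    (hz : ∀ y, c₁ * d z u ^ 2 + c₂ * d z v ^ 2 ≤ c₁ * d y u ^ 2 + c₂ * d y v ^ 2) :
    z ∈ twoPointLocus d u v := by
  refine ⟨c₁ / (c₁ + c₂), c₂ / (c₁ + c₂), by positivity, by positivity, by field_simp,
    fun y => ?_⟩
  simp only [div_mul_eq_mul_div, ← add_div]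
  exact div_le_div_of_nonneg_right (hz y) hc.le

lemma mem_twoPointLocus_of_add_eq (htri : ∀ y, d u v ≤ d y u + d y v)
    (hzu : 0 ≤ d z u) (hzv : 0 ≤ d z v) (hz : d z u + d z v = d u v) :
    z ∈ twoPointLocus d u v := by
  rcases (add_nonneg hzu hzv).eq_or_lt with hD | hD
  · have hu : d z u = 0 := by linarith
    have hv : d z v = 0 := by linarith
    refine mem_twoPointLocus_of_weighted_le zero_le_one zero_le_one (by norm_num) fun y => ?_
    rw [hu, hv]
    nlinarith [sq_nonneg (d y u), sq_nonneg (d y v)]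
  · refine mem_twoPointLocus_of_weighted_le hzv hzu (by linarith) fun y => ?_
    have hv : d z v = d u v - d z u := by linarith
    calc d z v * d z u ^ 2 + d z u * d z v ^ 2 = d z u * (d u v - d z u) * d u v := by
          rw [hv]; ring
      _ ≤ (d u v - d z u) * d y u ^ 2 + d z u * d y v ^ 2 :=
          mul_sub_mul_le_weighted_sq hzu (by linarith) (htri y)
      _ = d z v * d y u ^ 2 + d z u * d y v ^ 2 := by rw [hv]

lemma notMem_twoPointLocus_of_lt_of_lt {y : α} (hyu : 0 ≤ d y u) (hyv : 0 ≤ d y v)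
    (hu : d y u < d z u) (hv : d y v < d z v) : z ∉ twoPointLocus d u v := by
  rintro ⟨w₁, w₂, hw₁, hw₂, hw, hz⟩
  have hu2 : d y u ^ 2 < d z u ^ 2 := pow_lt_pow_left₀ hu hyu two_ne_zero
  have hv2 : d y v ^ 2 < d z v ^ 2 := pow_lt_pow_left₀ hv hyv two_ne_zero
  have hzy := hz y
  rcases hw₁.eq_or_lt with rfl | hw₁
  · nlinarith
  · nlinarith [mul_lt_mul_of_pos_left hu2 hw₁, mul_le_mul_of_nonneg_left hv2.le hw₂]

end TwoPointLocus

section Grid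

variable {m n : ℕ}

def gridBox (u v : Fin m × Fin n) : Set (Fin m × Fin n) :=
  {z | min u.1.val v.1.val ≤ z.1.val ∧ z.1.val ≤ max u.1.val v.1.val ∧
    min u.2.val v.2.val ≤ z.2.val ∧ z.2.val ≤ max u.2.val v.2.val}

lemma gridDist_le_add (u v y : Fin m × Fin n) : gridDist u v ≤ gridDist y u + gridDist y v := by
  simp only [gridDist]
  omega

lemma gridBox_eq_setOf_gridDist_add_eq (u v : Fin m × Fin n) :
    gridBox u v = {z | gridDist u z + gridDist z v = gridDist u v} := by
  ext z
  simp only [gridBox, gridDist, Set.mem_ofPred_eq]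
  omega

def gridBoxProj (u v z : Fin m × Fin n) : Fin m × Fin n :=
  (⟨min (max z.1.val (min u.1.val v.1.val)) (max u.1.val v.1.val), by omega⟩,
    ⟨min (max z.2.val (min u.2.val v.2.val)) (max u.2.val v.2.val), by omega⟩)

lemma gridDist_gridBoxProj_lt {u v z : Fin m × Fin n} (hz : z ∉ gridBox u v) :
    gridDist (gridBoxProj u v z) u < gridDist z u ∧
      gridDist (gridBoxProj u v z) v < gridDist z v := by
  simp only [gridBox, Set.mem_ofPred_eq] at hz
  simp only [gridBoxProj, gridDist]
  omega

lemma twoPointLocus_gridDist_eq_gridBox (u v : Fin m × Fin n) :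
    twoPointLocus (fun a b => (gridDist a b : ℝ)) u v = gridBox u v := by
  ext z
  constructor
  · intro hz
    by_contra hbox
    obtain ⟨hu, hv⟩ := gridDist_gridBoxProj_lt hbox
    exact notMem_twoPointLocus_of_lt_of_lt (Nat.cast_nonneg _) (Nat.cast_nonneg _)
      (Nat.cast_lt.2 hu) (Nat.cast_lt.2 hv) hz
  · intro hz
    have hgeod : gridDist z u + gridDist z v = gridDist u v := by
      simp only [gridBox, gridDist, Set.mem_ofPred_eq] at hz ⊢
      omega
    exact mem_twoPointLocus_of_add_eq (fun y => by exact_mod_cast gridDist_le_add u v y)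
      (Nat.cast_nonneg _) (Nat.cast_nonneg _) (by exact_mod_cast hgeod)

end Grid

/-- In a grid graph, the two-point locus `Π({u,v})` equals the axis-aligned
rectangle spanned by `u` and `v`, which is exactly the set of vertices on
shortest `u`–`v` paths. -/
theorem grid_two_point_locus_eq_rectangle
    (m n : ℕ) (u v : Fin m × Fin n) :
    ({z : Fin m × Fin n | ∃ w₁ w₂ : ℝ, 0 ≤ w₁ ∧ 0 ≤ w₂ ∧ w₁ + w₂ = 1 ∧
        ∀ y : Fin m × Fin n,
          w₁ * (gridDist z u : ℝ) ^ 2 + w₂ * (gridDist z v : ℝ) ^ 2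
            ≤ w₁ * (gridDist y u : ℝ) ^ 2 + w₂ * (gridDist y v : ℝ) ^ 2}
      = {z : Fin m × Fin n |
          min u.1.val v.1.val ≤ z.1.val ∧ z.1.val ≤ max u.1.val v.1.val ∧
          min u.2.val v.2.val ≤ z.2.val ∧ z.2.val ≤ max u.2.val v.2.val}) ∧
    ({z : Fin m × Fin n |
          min u.1.val v.1.val ≤ z.1.val ∧ z.1.val ≤ max u.1.val v.1.val ∧
          min u.2.val v.2.val ≤ z.2.val ∧ z.2.val ≤ max u.2.val v.2.val}
      = {z : Fin m × Fin n | gridDist u z + gridDist z v = gridDist u v}) :=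
  ⟨twoPointLocus_gridDist_eq_gridBox u v, gridBox_eq_setOf_gridDist_add_eq u v⟩
end

section
/- In a finite tree, the vertex v ∉ Π(Λ) maximizing |Π(Λ ∪ {v})| is exactly the vertex maximizing the distance d(v, b(v)) to the subtree spanned by Π(Λ), where b(v) is the unique closest vertex of Π(Λ) to v; consequently, the solution of max_{v ∉ Π(Λ)} |Π(Λ ∪ {v})| coincides with the solution of the constrained problem max d(y, b) over y ∉ Π(Λ) and b in the inner boundary of the subtree with the path Γ(y,b) \ {b} disjoint from Π(Λ). -/
/-- Vertex set of the unique path between `a` and `b` in a tree, described by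
metric betweenness. -/
def pathSet {V : Type*} (G : SimpleGraph V) (a b : V) : Set V :=
  {p : V | G.dist a p + G.dist p b = G.dist a b}

/-- The locus of a set `Λ` of tree vertices, via pairwise decomposability. -/
def treeLocus {V : Type*} (G : SimpleGraph V) (Λ : Finset V) : Set V :=
  ⋃ a ∈ Λ, ⋃ b ∈ Λ, pathSet G a b

/-- Inner boundary of a set of vertices: members adjacent to some outside
vertex. -/
def innerBoundary {V : Type*} (G : SimpleGraph V) (S : Set V) : Set V :=
  {x : V | x ∈ S ∧ ∃ z : V, z ∉ S ∧ G.Adj x z}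

namespace TreeAux

open SimpleGraph

variable {V : Type*} [Fintype V] [DecidableEq V] {G : SimpleGraph V}

lemma mem_pathSet {a b p : V} :
    p ∈ pathSet G a b ↔ G.dist a p + G.dist p b = G.dist a b := Iff.rfl

lemma left_mem_pathSet (a b : V) : a ∈ pathSet G a b := by
  simp [mem_pathSet]

lemma right_mem_pathSet (a b : V) : b ∈ pathSet G a b := by
  simp [mem_pathSet]

lemma pathSet_comm (a b : V) : pathSet G a b = pathSet G b a := by
  ext p
  simp only [mem_pathSet]
  rw [SimpleGraph.dist_comm (u := a) (v := p), SimpleGraph.dist_comm (u := p) (v := b),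
    SimpleGraph.dist_comm (u := a) (v := b)]
  omega

/-- In a tree, the path set is the support of any path between the endpoints. -/
lemma pathSet_eq_support (hT : G.IsTree) {a b : V} (w : G.Walk a b) (hw : w.IsPath) :
    pathSet G a b = {p | p ∈ w.support} := by
  have hconn := hT.isConnected
  have hlen : w.length = G.dist a b := by
    obtain ⟨p0, hp0, hl0⟩ := hconn.exists_path_of_dist a b
    rw [(hT.existsUnique_path a b).unique hw hp0]; exact hl0
  ext p
  constructor
  · intro hp
    obtain ⟨w1, hw1p, hw1⟩ := hconn.exists_path_of_dist a p
    obtain ⟨w2, hw2p, hw2⟩ := hconn.exists_path_of_dist p b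
    have hlen2 : (w1.append w2).length = G.dist a b := by
      rw [SimpleGraph.Walk.length_append, hw1, hw2]; exact hp
    have hpath : (w1.append w2).IsPath := (w1.append w2).isPath_of_length_eq_dist hlen2
    have heq := (hT.existsUnique_path a b).unique hw hpath
    rw [heq]
    simp [SimpleGraph.Walk.mem_support_append_iff]
  · intro hp
    have h1 : G.dist a p ≤ (w.takeUntil p hp).length := SimpleGraph.dist_le _
    have h2 : G.dist p b ≤ (w.dropUntil p hp).length := SimpleGraph.dist_le _
    have h3 : (w.takeUntil p hp).length + (w.dropUntil p hp).length = w.length := by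
      have h5 := congrArg SimpleGraph.Walk.length (w.take_spec hp)
      rwa [SimpleGraph.Walk.length_append] at h5
    have h4 := hconn.dist_triangle (u := a) (v := p) (w := b)
    show G.dist a p + G.dist p b = G.dist a b
    omega

lemma ncard_pathSet (hT : G.IsTree) (a b : V) :
    (pathSet G a b).ncard = G.dist a b + 1 := by
  obtain ⟨w, hw, hl⟩ := hT.isConnected.exists_path_of_dist a b
  rw [pathSet_eq_support hT w hw]
  have hs : {p | p ∈ w.support} = (w.support.toFinset : Set V) := by ext; simp
  rw [hs, Set.ncard_coe_finset, List.toFinset_card_of_nodup hw.support_nodup,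
      SimpleGraph.Walk.length_support, hl]

lemma pathSet_subset_left (hconn : G.Connected) {a b m : V} (hm : m ∈ pathSet G a b) :
    pathSet G a m ⊆ pathSet G a b := by
  intro p hp
  have h1 : G.dist a p + G.dist p m = G.dist a m := hp
  have h2 : G.dist a m + G.dist m b = G.dist a b := hm
  have h3 : G.dist p b ≤ G.dist p m + G.dist m b := hconn.dist_triangle
  have h4 : G.dist a b ≤ G.dist a p + G.dist p b := hconn.dist_triangle
  show G.dist a p + G.dist p b = G.dist a b
  omega

lemma pathSet_subset_union (hT : G.IsTree) {a b m : V} (hm : m ∈ pathSet G a b) :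
    pathSet G a b ⊆ pathSet G a m ∪ pathSet G m b := by
  obtain ⟨w, hw, _⟩ := hT.isConnected.exists_path_of_dist a b
  have hms : m ∈ w.support := by rw [pathSet_eq_support hT w hw] at hm; exact hm
  intro p hp
  rw [pathSet_eq_support hT w hw] at hp
  simp only [Set.mem_setOf_eq] at hp
  rw [← w.take_spec hms, SimpleGraph.Walk.mem_support_append_iff] at hp
  rcases hp with h | h
  · left; rw [pathSet_eq_support hT _ (hw.takeUntil hms)]; exact h
  · right; rw [pathSet_eq_support hT _ (hw.dropUntil hms)]; exact h

lemma pathSet_subset_union_three (hT : G.IsTree) (x y c : V) :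
    pathSet G x y ⊆ pathSet G x c ∪ pathSet G c y := by
  obtain ⟨w1, hw1, _⟩ := hT.isConnected.exists_path_of_dist x c
  obtain ⟨w2, hw2, _⟩ := hT.isConnected.exists_path_of_dist c y
  intro p hp
  rw [pathSet_eq_support hT ((w1.append w2).toPath : G.Walk x y)
      (w1.append w2).toPath.2] at hp
  have hp2 : p ∈ (w1.append w2).support :=
    SimpleGraph.Walk.support_toPath_subset _ hp
  rw [SimpleGraph.Walk.mem_support_append_iff] at hp2
  rcases hp2 with h | h
  · left; rw [pathSet_eq_support hT w1 hw1]; exact h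
  · right; rw [pathSet_eq_support hT w2 hw2]; exact h

lemma exists_adj_pen (hT : G.IsTree) {a b : V} (hne : a ≠ b) :
    ∃ z, G.Adj b z ∧ z ∈ pathSet G a b := by
  obtain ⟨p, hp, hl⟩ := hT.isConnected.exists_path_of_dist b a
  cases p with
  | nil => exact absurd rfl hne.symm
  | @cons _ z _ h q =>
    refine ⟨z, h, ?_⟩
    rw [pathSet_comm, pathSet_eq_support hT _ hp]
    simp [SimpleGraph.Walk.support_cons]

/-- Entry point of the geodesic from `u` to `c ∈ S` into `S`. -/
lemma exists_entry (hT : G.IsTree) {S : Set V} {c : V} (hc : c ∈ S) :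
    ∀ n : ℕ, ∀ u, u ∉ S → G.dist u c = n →
      ∃ w, w ∈ S ∧ w ∈ pathSet G u c ∧ (pathSet G u w \ {w}) ∩ S = ∅ := by
  have hconn := hT.isConnected
  intro n
  induction n using Nat.strong_induction_on with
  | _ n ih =>
    intro u hu hn
    have hne : u ≠ c := fun h => hu (h ▸ hc)
    have hpos : 0 < n := hn ▸ hconn.pos_dist_of_ne hne
    obtain ⟨w0, hw0p, hw0l⟩ := hconn.exists_path_of_dist u c
    cases w0 with
    | nil => exact absurd rfl hne
    | @cons _ z _ h q =>
      have hql : q.length + 1 = n := by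
        simpa [hn] using hw0l
      have hduz : G.dist u z = 1 := SimpleGraph.dist_eq_one_iff_adj.mpr h
      have hdzc_le : G.dist z c ≤ q.length := SimpleGraph.dist_le q
      have htr : G.dist u c ≤ G.dist u z + G.dist z c := hconn.dist_triangle
      have hdzc : G.dist z c = n - 1 := by omega
      have hzmem : z ∈ pathSet G u c := by
        show G.dist u z + G.dist z c = G.dist u c
        omega
      by_cases hzS : z ∈ S
      · refine ⟨z, hzS, hzmem, ?_⟩
        rw [Set.eq_empty_iff_forall_notMem]
        rintro p ⟨⟨hp, hpz⟩, hpS⟩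
        have hp1 : G.dist u p + G.dist p z = 1 := by
          have : G.dist u p + G.dist p z = G.dist u z := hp
          omega
        have : p = u ∨ p = z := by
          rcases Nat.eq_zero_or_pos (G.dist u p) with h0 | h0
          · left; exact (hconn.dist_eq_zero_iff.mp h0).symm
          · right; exact hconn.dist_eq_zero_iff.mp (by omega)
        rcases this with rfl | rfl
        · exact hu hpS
        · exact hpz rfl
      · obtain ⟨w, hwS, hwzc, hwdisj⟩ := ih (n - 1) (by omega) z hzS hdzc
        have hzw : G.dist z w + G.dist w c = G.dist z c := hwzc
        have hduw_le : G.dist u w ≤ 1 + G.dist z w := by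
          have := hconn.dist_triangle (u := u) (v := z) (w := w)
          omega
        have hduw_ge : G.dist u c ≤ G.dist u w + G.dist w c := hconn.dist_triangle
        have hduw : G.dist u w = 1 + G.dist z w := by omega
        have hwuc : w ∈ pathSet G u c := by
          show G.dist u w + G.dist w c = G.dist u c
          omega
        have hsub : insert u (pathSet G z w) ⊆ pathSet G u w := by
          rintro p hpi
          rcases Set.mem_insert_iff.mp hpi with rfl | hp
          · exact left_mem_pathSet _ _
          · have hp1 : G.dist z p + G.dist p w = G.dist z w := hp
            have h2 : G.dist u p ≤ 1 + G.dist z p := by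
              have := hconn.dist_triangle (u := u) (v := z) (w := p)
              omega
            have h3 : G.dist u w ≤ G.dist u p + G.dist p w := hconn.dist_triangle
            show G.dist u p + G.dist p w = G.dist u w
            omega
        have hunm : u ∉ pathSet G z w := by
          intro hmem
          have h1 : G.dist z u + G.dist u w = G.dist z w := hmem
          have h2 : G.dist z u = 1 := by rw [SimpleGraph.dist_comm]; exact hduz
          omega
        have hcards : (pathSet G u w).ncard ≤ (insert u (pathSet G z w)).ncard := by
          rw [Set.ncard_insert_of_notMem hunm (Set.toFinite _),
            ncard_pathSet hT, ncard_pathSet hT]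
          omega
        have hEq : insert u (pathSet G z w) = pathSet G u w :=
          Set.eq_of_subset_of_ncard_le hsub hcards (Set.toFinite _)
        refine ⟨w, hwS, hwuc, ?_⟩
        rw [Set.eq_empty_iff_forall_notMem]
        rintro p ⟨⟨hp, hpw⟩, hpS⟩
        rw [← hEq] at hp
        rcases hp with rfl | hp
        · exact hu hpS
        · have : p ∈ (pathSet G z w \ {w}) ∩ S := ⟨⟨hp, hpw⟩, hpS⟩
          rw [hwdisj] at this
          exact this

/-- Gate property: the nearest point of a convex set lies on every geodesic to it. -/
lemma gate (hT : G.IsTree) {S : Set V}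
    (hconv : ∀ x ∈ S, ∀ y ∈ S, pathSet G x y ⊆ S)
    {u b : V} (hu : u ∉ S) (hb : b ∈ S)
    (hmin : ∀ c ∈ S, G.dist u b ≤ G.dist u c)
    {c : V} (hc : c ∈ S) : b ∈ pathSet G u c := by
  have hconn := hT.isConnected
  obtain ⟨w, hwS, hwuc, hwdisj⟩ := exists_entry hT hc (G.dist u c) u hu rfl
  by_cases hbw : b = w
  · exact hbw ▸ hwuc
  exfalso
  have h1 : pathSet G u w \ {w} ⊆ pathSet G u b \ {b} := by
    rintro p ⟨hp, hpw⟩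
    simp only [Set.mem_singleton_iff] at hpw
    have hpS : p ∉ S := by
      intro hpS
      have : p ∈ (pathSet G u w \ {w}) ∩ S := ⟨⟨hp, hpw⟩, hpS⟩
      rw [hwdisj] at this; exact this
    have := pathSet_subset_union_three hT u w b hp
    rcases this with h | h
    · exact ⟨h, fun hpb => hpS (by rw [Set.mem_singleton_iff] at hpb; exact hpb ▸ hb)⟩
    · exact absurd (hconv b hb w hwS h) hpS
  have hub_le : G.dist u b ≤ G.dist u w := hmin w hwS
  have hcard1 : (pathSet G u w \ {w}).ncard + 1 = G.dist u w + 1 := by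
    rw [Set.ncard_diff_singleton_add_one (right_mem_pathSet u w) (Set.toFinite _),
      ncard_pathSet hT]
  have hcard2 : (pathSet G u b \ {b}).ncard + 1 = G.dist u b + 1 := by
    rw [Set.ncard_diff_singleton_add_one (right_mem_pathSet u b) (Set.toFinite _),
      ncard_pathSet hT]
  have hEq : pathSet G u w \ {w} = pathSet G u b \ {b} :=
    Set.eq_of_subset_of_ncard_le h1 (by omega) (Set.toFinite _)
  -- penultimate vertex
  have hune : u ≠ w := fun h => hu (h ▸ hwS)
  obtain ⟨z, hadj, hzmem⟩ := exists_adj_pen hT hune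
  have hzw : z ≠ w := hadj.ne.symm -- Adj w z
  have hzin : z ∈ pathSet G u w \ {w} := ⟨hzmem, by simpa using hzw⟩
  have hznS : z ∉ S := by
    intro hzS
    have : z ∈ (pathSet G u w \ {w}) ∩ S := ⟨hzin, hzS⟩
    rw [hwdisj] at this; exact this
  have hzin2 : z ∈ pathSet G u b \ {b} := hEq ▸ hzin
  have hdub : G.dist u b = G.dist u w := by
    have h := congrArg Set.ncard hEq
    omega
  have hzb : G.dist z b = 1 := by
    have ha : G.dist u z + G.dist z w = G.dist u w := hzmem
    have hb1 : G.dist u z + G.dist z b = G.dist u b := hzin2.1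
    have hzw1 : G.dist z w = 1 := SimpleGraph.dist_eq_one_iff_adj.mpr hadj.symm
    omega
  have hadjzb : G.Adj z b := SimpleGraph.dist_eq_one_iff_adj.mp hzb
  -- the walk b - z - w is a path, so z lies on the geodesic from b to w, hence in S
  have hbz : b ≠ z := hadjzb.ne.symm
  have hW : (SimpleGraph.Walk.cons hadjzb.symm
      (SimpleGraph.Walk.cons hadj.symm SimpleGraph.Walk.nil)).IsPath := by
    simp [SimpleGraph.Walk.isPath_def, hbz, hbw, hzw]
  have : z ∈ pathSet G b w := by
    rw [pathSet_eq_support hT _ hW]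
    simp
  exact hznS (hconv b hb w hwS this)

end TreeAux

open TreeAux SimpleGraph in
/-- Active next-class selection for trees: maximizing the size of the grown
locus is equivalent to maximizing the distance to the locus subtree, which in
turn is equivalent to solving the constrained boundary-distance problem. -/
theorem tree_active_next_class_selection
    {V : Type*} [Fintype V] [DecidableEq V]
    (G : SimpleGraph V) (hT : G.IsTree)
    (Λ : Finset V) (hΛ : 2 ≤ Λ.card)
    (bfun : V → V)
    (hbfun : ∀ u : V, bfun u ∈ treeLocus G Λ ∧
      ∀ c ∈ treeLocus G Λ, G.dist u (bfun u) ≤ G.dist u c)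
    (v : V) (hv : v ∉ treeLocus G Λ) :
    ((∀ u : V, u ∉ treeLocus G Λ →
        (treeLocus G (insert u Λ)).ncard ≤ (treeLocus G (insert v Λ)).ncard)
      ↔ (∀ u : V, u ∉ treeLocus G Λ → G.dist u (bfun u) ≤ G.dist v (bfun v))) ∧
    ((∀ u : V, u ∉ treeLocus G Λ → G.dist u (bfun u) ≤ G.dist v (bfun v))
      ↔ (bfun v ∈ innerBoundary G (treeLocus G Λ) ∧
          (pathSet G v (bfun v) \ {bfun v}) ∩ treeLocus G Λ = ∅ ∧
          ∀ y : V, y ∉ treeLocus G Λ →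
            ∀ b' ∈ innerBoundary G (treeLocus G Λ),
              (pathSet G y b' \ {b'}) ∩ treeLocus G Λ = ∅ →
              G.dist y b' ≤ G.dist v (bfun v))) := by
  have hconn := hT.isConnected
  set S := treeLocus G Λ with hS
  obtain ⟨a0, ha0⟩ : Λ.Nonempty := Finset.card_pos.mp (by omega)
  have hsubΛ : ∀ {a b : V}, a ∈ Λ → b ∈ Λ → pathSet G a b ⊆ S := by
    intro a b ha hb p hp
    simp only [hS, treeLocus, Set.mem_iUnion]
    exact ⟨a, ha, b, hb, hp⟩
  have hΛS : ∀ {a : V}, a ∈ Λ → a ∈ S := fun {a} ha =>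
    hsubΛ ha ha (left_mem_pathSet a a)
  -- convexity of the locus
  have hconv : ∀ x ∈ S, ∀ y ∈ S, pathSet G x y ⊆ S := by
    intro x hx y hy
    simp only [hS, treeLocus, Set.mem_iUnion] at hx hy
    obtain ⟨a, ha, b, hb, hx⟩ := hx
    obtain ⟨c, hc, d, hd, hy⟩ := hy
    intro p hp
    rcases pathSet_subset_union_three hT x y a hp with h | h
    · rw [pathSet_comm] at h
      exact hsubΛ ha hb (pathSet_subset_left hconn hx h)
    · rcases pathSet_subset_union_three hT a y c h with h2 | h2
      · exact hsubΛ ha hc h2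
      · exact hsubΛ hc hd (pathSet_subset_left hconn hy h2)
  have hbS : ∀ u : V, bfun u ∈ S := fun u => (hbfun u).1
  have hbmin : ∀ u : V, ∀ c ∈ S, G.dist u (bfun u) ≤ G.dist u c := fun u => (hbfun u).2
  -- key1 : geodesic to the projection meets S only at the projection
  have key1 : ∀ u : V, u ∉ S → pathSet G u (bfun u) ∩ S = {bfun u} := by
    intro u hu
    apply Set.eq_of_subset_of_subset
    · rintro p ⟨hp, hpS⟩
      have h1 : G.dist u p + G.dist p (bfun u) = G.dist u (bfun u) := hp
      have h2 := hbmin u p hpS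
      have : G.dist p (bfun u) = 0 := by omega
      simpa using (hconn.dist_eq_zero_iff.mp this)
    · rintro p hp
      rw [Set.mem_singleton_iff] at hp
      subst hp
      exact ⟨right_mem_pathSet _ _, hbS u⟩
  have key1' : ∀ u : V, u ∉ S → (pathSet G u (bfun u) \ {bfun u}) ∩ S = ∅ := by
    intro u hu
    rw [Set.eq_empty_iff_forall_notMem]
    rintro p ⟨⟨hp, hpb⟩, hpS⟩
    have hmem : p ∈ pathSet G u (bfun u) ∩ S := ⟨hp, hpS⟩
    rw [key1 u hu] at hmem
    exact hpb hmem
  -- the projection is a gate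
  have hgate : ∀ u : V, u ∉ S → ∀ c ∈ S, bfun u ∈ pathSet G u c := by
    intro u hu c hc
    exact gate hT hconv hu (hbS u) (hbmin u) hc
  -- projection is on the inner boundary
  have hbd : ∀ u : V, u ∉ S → bfun u ∈ innerBoundary G S := by
    intro u hu
    refine ⟨hbS u, ?_⟩
    have hub : u ≠ bfun u := fun h => hu (h ▸ hbS u)
    obtain ⟨z, hadj, hzmem⟩ := exists_adj_pen hT hub
    have hzb : z ≠ bfun u := hadj.ne.symm
    refine ⟨z, ?_, hadj⟩
    intro hzS
    have : z ∈ pathSet G u (bfun u) ∩ S := ⟨hzmem, hzS⟩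
    rw [key1 u hu] at this
    exact hzb this
  -- locus growth formula
  have hloc : ∀ u : V, u ∉ S →
      treeLocus G (insert u Λ) = S ∪ pathSet G u (bfun u) := by
    intro u hu
    apply Set.eq_of_subset_of_subset
    · intro p hp
      simp only [treeLocus, Set.mem_iUnion] at hp
      obtain ⟨x, hx, y, hy, hp⟩ := hp
      rw [Finset.mem_insert] at hx hy
      have main : ∀ y : V, y ∈ Λ → ∀ p, p ∈ pathSet G u y →
          p ∈ S ∪ pathSet G u (bfun u) := by
        intro y hy p hp
        have hbm : bfun u ∈ pathSet G u y := hgate u hu y (hΛS hy)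
        rcases pathSet_subset_union hT hbm hp with h | h
        · exact Or.inr h
        · exact Or.inl (hconv _ (hbS u) _ (hΛS hy) h)
      rcases hx with hxu | hx
      · rcases hy with hyu | hy
        · -- pathSet u u = {u}
          rw [hxu, hyu] at hp
          have h1 : G.dist u p + G.dist p u = G.dist u u := hp
          have : G.dist u p = 0 := by
            have h0 : G.dist u u = 0 := SimpleGraph.dist_self
            omega
          have hpu : p = u := (hconn.dist_eq_zero_iff.mp this).symm
          subst hpu
          exact Or.inr (left_mem_pathSet _ _)
        · rw [hxu] at hp
          exact main y hy p hp
      · rcases hy with hyu | hy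
        · rw [hyu, pathSet_comm] at hp
          exact main x hx p hp
        · exact Or.inl (hsubΛ hx hy hp)
    · rintro p (hp | hp)
      · simp only [hS, treeLocus, Set.mem_iUnion] at hp ⊢
        obtain ⟨a, ha, b, hb, hp⟩ := hp
        exact ⟨a, Finset.mem_insert_of_mem ha, b, Finset.mem_insert_of_mem hb, hp⟩
      · have hbm : bfun u ∈ pathSet G u a0 := hgate u hu a0 (hΛS ha0)
        have : p ∈ pathSet G u a0 := pathSet_subset_left hconn hbm hp
        simp only [treeLocus, Set.mem_iUnion]
        exact ⟨u, Finset.mem_insert_self u Λ, a0, Finset.mem_insert_of_mem ha0, this⟩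
  -- cardinality formula
  have hncard : ∀ u : V, u ∉ S →
      (treeLocus G (insert u Λ)).ncard = S.ncard + G.dist u (bfun u) := by
    intro u hu
    rw [hloc u hu]
    have hsplit : S ∪ pathSet G u (bfun u) = S ∪ (pathSet G u (bfun u) \ {bfun u}) := by
      apply Set.eq_of_subset_of_subset
      · rintro p (hp | hp)
        · exact Or.inl hp
        · by_cases hpb : p = bfun u
          · exact Or.inl (hpb ▸ hbS u)
          · exact Or.inr ⟨hp, hpb⟩
      · rintro p (hp | hp)
        · exact Or.inl hp
        · exact Or.inr hp.1
    rw [hsplit, Set.ncard_union_eq ?_ (Set.toFinite _) (Set.toFinite _)]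
    · have h1 : (pathSet G u (bfun u) \ {bfun u}).ncard + 1 = G.dist u (bfun u) + 1 := by
        rw [Set.ncard_diff_singleton_add_one (right_mem_pathSet _ _) (Set.toFinite _),
          ncard_pathSet hT]
      omega
    · rw [Set.disjoint_left]
      rintro p hpS ⟨hp, hpb⟩
      exact hpb (by
        have : p ∈ pathSet G u (bfun u) ∩ S := ⟨hp, hpS⟩
        rw [key1 u hu] at this
        exact this)
  constructor
  · constructor
    · intro hmax u hu
      have h1 := hmax u hu
      rw [hncard u hu, hncard v hv] at h1
      omega
    · intro hd u hu
      rw [hncard u hu, hncard v hv]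
      have := hd u hu
      omega
  · constructor
    · intro hd
      refine ⟨hbd v hv, key1' v hv, ?_⟩
      intro y hy b' hb' hdisjy
      have hb'S : b' ∈ S := hb'.1
      have hg : bfun y ∈ pathSet G y b' := hgate y hy b' hb'S
      have hbeq : bfun y = b' := by
        by_contra hne
        have : bfun y ∈ (pathSet G y b' \ {b'}) ∩ S := ⟨⟨hg, hne⟩, hbS y⟩
        rw [hdisjy] at this
        exact this
      rw [← hbeq]
      exact hd y hy
    · rintro ⟨_, _, hmax⟩ u hu
      exact hmax u hu (bfun u) (hbd u hu) (key1' u hu)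
end
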